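/- Let M_C = [[A, C],[0, B]] be a 2×2 upper triangular operator matrix on H₁ ⊕ H₂. If both A and B possess Bishop's property (β) at a point λ₀, then M_C possesses Bishop's property (β) at λ₀. -/
import Mathlib
open Filter

section Defs

variable {X : Type*} [NormedAddCommGroup X] [NormedSpace ℂ X]

/-- `T` possesses Bishop's property (β) at `l₀`. -/
def HasBishopBetaAt (T : X →L[ℂ] X) (l₀ : ℂ) : Prop :=
  ∃ V : Set ℂ, IsOpen V ∧ l₀ ∈ V ∧
    ∀ U : Set ℂ, U ⊆ V → IsOpen U →
      ∀ f : ℕ → ℂ → X, (∀ n, AnalyticOnNhd ℂ (f n) U) →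
        (∀ K : Set ℂ, K ⊆ U → IsCompact K →
          TendstoUniformlyOn (fun n z => (T - z • (1 : X →L[ℂ] X)) (f n z)) 0 atTop K) →
        ∀ K : Set ℂ, K ⊆ U → IsCompact K →
          TendstoUniformlyOn (fun n z => f n z) 0 atTop K

end Defs

lemma tuoIff {E : Type*} [NormedAddCommGroup E] (F : ℕ → ℂ → E) (K : Set ℂ) :
    TendstoUniformlyOn F 0 atTop K ↔
      ∀ ε > 0, ∀ᶠ n in atTop, ∀ x ∈ K, ‖F n x‖ < ε := by
  simp [Metric.tendstoUniformlyOn_iff]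

lemma tuo_dom {E F : Type*} [NormedAddCommGroup E] [NormedAddCommGroup F]
    {G : ℕ → ℂ → E} {Fn : ℕ → ℂ → F} {K : Set ℂ} (c : ℝ)
    (hF : TendstoUniformlyOn Fn 0 atTop K)
    (h : ∀ n x, x ∈ K → ‖G n x‖ ≤ c * ‖Fn n x‖) :
    TendstoUniformlyOn G 0 atTop K := by
  rw [tuoIff] at hF ⊢
  intro ε hε
  have hc : (0:ℝ) < max c 1 := lt_max_of_lt_right one_pos
  filter_upwards [hF (ε / max c 1) (by positivity)] with n hn x hx
  calc ‖G n x‖ ≤ c * ‖Fn n x‖ := h n x hx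
    _ ≤ max c 1 * ‖Fn n x‖ := mul_le_mul_of_nonneg_right (le_max_left _ _) (norm_nonneg _)
    _ < max c 1 * (ε / max c 1) := mul_lt_mul_of_pos_left (hn x hx) hc
    _ = ε := by field_simp

lemma tuo_sub {E : Type*} [NormedAddCommGroup E] {F G : ℕ → ℂ → E} {K : Set ℂ}
    (hF : TendstoUniformlyOn F 0 atTop K) (hG : TendstoUniformlyOn G 0 atTop K) :
    TendstoUniformlyOn (fun n z => F n z - G n z) 0 atTop K := by
  rw [tuoIff] at hF hG ⊢
  intro ε hε
  filter_upwards [hF (ε/2) (by positivity), hG (ε/2) (by positivity)] with n h1 h2 x hx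
  calc ‖F n x - G n x‖ ≤ ‖F n x‖ + ‖G n x‖ := norm_sub_le _ _
    _ < ε/2 + ε/2 := add_lt_add (h1 x hx) (h2 x hx)
    _ = ε := by ring

lemma tuo_pair {E F : Type*} [NormedAddCommGroup E] [NormedAddCommGroup F]
    {G : ℕ → ℂ → E} {H : ℕ → ℂ → F} {K : Set ℂ}
    (hG : TendstoUniformlyOn G 0 atTop K) (hH : TendstoUniformlyOn H 0 atTop K) :
    TendstoUniformlyOn (fun n z => (G n z, H n z)) 0 atTop K := by
  rw [tuoIff] at hG hH ⊢
  intro ε hε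
  filter_upwards [hG ε hε, hH ε hε] with n h1 h2 x hx
  simpa [Prod.norm_def] using max_lt (h1 x hx) (h2 x hx)

variable {H₁ H₂ : Type*}
  [NormedAddCommGroup H₁] [InnerProductSpace ℂ H₁] [CompleteSpace H₁]
  [NormedAddCommGroup H₂] [InnerProductSpace ℂ H₂] [CompleteSpace H₂]

/-- Let `M` be the upper triangular operator matrix `[[A, C], [0, B]]` on `H₁ ⊕ H₂`.
If both `A` and `B` possess Bishop's property (β) at `l₀`, then so does `M`. -/
theorem bishopBetaAt_upper_triangular (A : H₁ →L[ℂ] H₁) (B : H₂ →L[ℂ] H₂)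
    (C : H₂ →L[ℂ] H₁) (M : (H₁ × H₂) →L[ℂ] (H₁ × H₂))
    (hM : ∀ p : H₁ × H₂, M p = (A p.1 + C p.2, B p.2))
    (l₀ : ℂ) (hA : HasBishopBetaAt A l₀) (hB : HasBishopBetaAt B l₀) :
    HasBishopBetaAt M l₀ := by
  obtain ⟨V₁, hV₁o, hl₁, hA'⟩ := hA
  obtain ⟨V₂, hV₂o, hl₂, hB'⟩ := hB
  refine ⟨V₁ ∩ V₂, hV₁o.inter hV₂o, ⟨hl₁, hl₂⟩, ?_⟩
  intro U hU hUo f hf hconv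
  -- key pointwise identity
  have key : ∀ n z, (M - z • (1 : (H₁ × H₂) →L[ℂ] (H₁ × H₂))) (f n z) =
      ((A - z • 1) ((f n z).1) + C ((f n z).2), (B - z • 1) ((f n z).2)) := by
    intro n z
    simp [hM, Prod.ext_iff, Prod.smul_def]
    abel
  -- second components converge uniformly to 0 on compacts
  have hg : ∀ K : Set ℂ, K ⊆ U → IsCompact K →
      TendstoUniformlyOn (fun n z => (f n z).2) 0 atTop K := by
    apply hB' U (fun z hz => (hU hz).2) hUo
    · intro n
      exact (ContinuousLinearMap.snd ℂ H₁ H₂).comp_analyticOnNhd (hf n)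
    · intro K hK hKc
      refine tuo_dom 1 (hconv K hK hKc) ?_
      intro n x hx
      rw [one_mul]
      calc ‖(B - x • 1) ((f n x).2)‖
          = ‖((M - x • (1 : (H₁ × H₂) →L[ℂ] (H₁ × H₂))) (f n x)).2‖ := by rw [key]
        _ ≤ ‖(M - x • (1 : (H₁ × H₂) →L[ℂ] (H₁ × H₂))) (f n x)‖ := norm_snd_le _
  -- first components converge uniformly to 0 on compacts
  have hh : ∀ K : Set ℂ, K ⊆ U → IsCompact K →
      TendstoUniformlyOn (fun n z => (f n z).1) 0 atTop K := by
    apply hA' U (fun z hz => (hU hz).1) hUo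
    · intro n
      exact (ContinuousLinearMap.fst ℂ H₁ H₂).comp_analyticOnNhd (hf n)
    · intro K hK hKc
      have h1 : TendstoUniformlyOn
          (fun n z => ((M - z • (1 : (H₁ × H₂) →L[ℂ] (H₁ × H₂))) (f n z)).1) 0 atTop K := by
        refine tuo_dom 1 (hconv K hK hKc) ?_
        intro n x hx
        rw [one_mul]
        exact norm_fst_le _
      have h2 : TendstoUniformlyOn (fun n z => C ((f n z).2)) 0 atTop K := by
        refine tuo_dom ‖C‖ (hg K hK hKc) ?_
        intro n x hx
        exact C.le_opNorm _
      have := tuo_sub h1 h2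
      refine this.congr ?_
      filter_upwards with n
      intro x hx
      simp only [key]
      abel
  intro K hK hKc
  have := tuo_pair (hh K hK hKc) (hg K hK hKc)
  exact this
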